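/- arXiv:cs/0702079 — 4 statements merged into one kernel-verified Lean document; each statement's English description precedes it below -/
import Mathlib

section
/- For every k ≥ 1 and r ≥ 1, the sum of the first k terms of the ruler sequence is at most the sum of any k consecutive terms starting at position r: ∑_{i=1}^{k} s_i ≤ ∑_{i=r}^{r+k-1} s_i. -/
/-- The ruler sequence: `s i = v₂(i) + 1`. -/
def rulerSeq (i : ℕ) : ℕ := padicValNat 2 i + 1

/-!
The `k` terms of the ruler sequence at positions `m + 1, …, m + k` sum to
`k + v₂((m + k)! / m!)`, the valuation of the descending factorial `(m + k)⋯(m + 1)`.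
Since `k!` divides every such product of `k` consecutive integers, the valuation, and hence
the window sum, is smallest for `m = 0`.
-/

open Finset

theorem padicValNat_le_of_dvd {p a b : ℕ} (hp : p ≠ 1) (hb : b ≠ 0) (h : a ∣ b) :
    padicValNat p a ≤ padicValNat p b :=
  (padicValNat_dvd_iff_le_of_ne_one hp hb).mp (pow_padicValNat_dvd.trans h)

theorem sum_Ioc_padicValNat (p : ℕ) [Fact p.Prime] (m n : ℕ) :
    ∑ i ∈ Ioc m (m + n), padicValNat p i = padicValNat p ((m + n).descFactorial n) := by
  induction n with
  | zero => simp
  | succ n ih =>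
    rw [← add_assoc, sum_Ioc_succ_top (by omega), ih, Nat.succ_descFactorial_succ,
      padicValNat.mul (by omega) (Nat.descFactorial_pos.mpr (by omega)).ne', add_comm]

theorem sum_Ioc_rulerSeq (m n : ℕ) :
    ∑ i ∈ Ioc m (m + n), rulerSeq i = n + padicValNat 2 ((m + n).descFactorial n) := by
  simp only [rulerSeq, sum_add_distrib, sum_Ioc_padicValNat, sum_const, Nat.card_Ioc,
    add_tsub_cancel_left, smul_eq_mul, mul_one, add_comm]

theorem ruler_prefix_sum_minimal_general (k r : ℕ) (hr : 1 ≤ r) :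
    ∑ i ∈ Finset.Icc 1 k, rulerSeq i ≤ ∑ i ∈ Finset.Icc r (r + k - 1), rulerSeq i := by
  obtain ⟨m, rfl⟩ := Nat.exists_eq_add_of_le' hr
  have hprefix : Icc 1 k = Ioc 0 (0 + k) := by rw [← Icc_add_one_left_eq_Ioc, zero_add, zero_add]
  have hwindow : Icc (m + 1) (m + 1 + k - 1) = Ioc m (m + k) := by
    rw [← Icc_add_one_left_eq_Ioc]; congr 1; omega
  rw [hprefix, hwindow, sum_Ioc_rulerSeq, sum_Ioc_rulerSeq, zero_add, Nat.descFactorial_self]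
  gcongr
  exact padicValNat_le_of_dvd (by norm_num) (Nat.descFactorial_pos.mpr (by omega)).ne'
    (Nat.factorial_dvd_descFactorial _ _)

theorem ruler_prefix_sum_minimal (k r : ℕ) (hk : 1 ≤ k) (hr : 1 ≤ r) :
    ∑ i ∈ Finset.Icc 1 k, rulerSeq i ≤ ∑ i ∈ Finset.Icc r (r + k - 1), rulerSeq i :=
  ruler_prefix_sum_minimal_general k r hr
end

section
/- For every r ≥ 1 and j ≥ 1, the sum of the 2j consecutive terms of the ruler sequence starting at position r satisfies ∑_{i=r}^{r+2j-1} s_i = 2j + ∑_{i=r'}^{r'+j-1} s_i, where r' = ⌈r/2⌉. -/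
lemma rulerSeq_even (k : ℕ) (hk : k ≠ 0) : rulerSeq (2 * k) = rulerSeq k + 1 := by
  unfold rulerSeq
  rw [padicValNat.mul (by norm_num) hk, padicValNat.self (by norm_num)]
  ring

lemma rulerSeq_odd (m : ℕ) (hm : Odd m) : rulerSeq m = 1 := by
  unfold rulerSeq
  rw [padicValNat.eq_zero_of_not_dvd]
  rw [Nat.two_dvd_ne_zero]
  exact Nat.odd_iff.mp hm

lemma ruler_pair (m : ℕ) (hm : 1 ≤ m) :
    rulerSeq m + rulerSeq (m + 1) = 2 + rulerSeq ((m + 1) / 2) := by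
  rcases Nat.even_or_odd m with he | ho
  · obtain ⟨k, hk⟩ := he
    have hk' : m = 2 * k := by omega
    have hk0 : k ≠ 0 := by omega
    have h1 : (m + 1) / 2 = k := by omega
    rw [h1, show m + 1 = 2 * k + 1 from by omega,
      rulerSeq_odd (2 * k + 1) ⟨k, by ring⟩, hk', rulerSeq_even k hk0]
    ring
  · obtain ⟨k, hk⟩ := ho
    have hm1 : m + 1 = 2 * (k + 1) := by omega
    have h1 : (m + 1) / 2 = k + 1 := by omega
    rw [h1, rulerSeq_odd m ⟨k, hk⟩, hm1, rulerSeq_even (k + 1) (by omega)]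
    ring

theorem ruler_window_sum_recursion (r j : ℕ) (hr : 1 ≤ r) (hj : 1 ≤ j) :
    ∑ i ∈ Finset.Icc r (r + 2 * j - 1), rulerSeq i =
      2 * j + ∑ i ∈ Finset.Icc ((r + 1) / 2) ((r + 1) / 2 + j - 1), rulerSeq i := by
  induction j, hj using Nat.le_induction with
  | base =>
    have h1 : r + 2 * 1 - 1 = r + 1 := by omega
    have h2 : (r + 1) / 2 + 1 - 1 = (r + 1) / 2 := by omega
    rw [h1, h2, show Finset.Icc r (r + 1) = {r, r + 1} by
      ext x; simp [Finset.mem_Icc]; omega]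
    rw [Finset.sum_pair (by omega), Finset.Icc_self, Finset.sum_singleton]
    rw [ruler_pair r hr]
  | succ j hj ih =>
    have hr' : 1 ≤ (r + 1) / 2 := by omega
    have e1 : r + 2 * (j + 1) - 1 = (r + 2 * j) + 1 := by omega
    have e2 : (r + 1) / 2 + (j + 1) - 1 = ((r + 1) / 2 + j - 1) + 1 := by omega
    have e3 : (r + 1) / 2 + j - 1 + 1 = (r + 1) / 2 + j := by omega
    rw [e1, Finset.sum_Icc_succ_top (by omega),
      show r + 2 * j = (r + 2 * j - 1) + 1 by omega,
      Finset.sum_Icc_succ_top (by omega), e2, Finset.sum_Icc_succ_top (by omega)]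
    have hpair := ruler_pair (r + 2 * j) (by omega)
    have hdiv : (r + 2 * j + 1) / 2 = (r + 1) / 2 + j := by omega
    rw [hdiv] at hpair
    rw [e3, show r + 2 * j - 1 + 1 = r + 2 * j from by omega]
    omega
end

section
/- Let m ≥ 2 and n ≥ 2 be integers and let A and A' be translates of D_n^m such that the first bar B_1' of A' is obtained from the bar B_r of A (for some 1 ≤ r ≤ 2^n) by translating it y* ≥ 1 downwards and x* to the right with 1 ≤ x* ≤ m−1; that is, A' is the translate of D_n^m whose origin is the origin of A shifted by ((r−1)m + x*, y_r − y*). Then the interiors of A and A' are disjoint. -/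
/-- `yCoord i = y_i = ∑_{j=1}^{i-1} s j`. -/
def yCoord (i : ℕ) : ℕ := ∑ j ∈ Finset.Ico 1 i, rulerSeq j

/-- The `i`-th bar of `D_n^m`: `[(i-1)m, im] × [y_i, y_i + 1]`. -/
def bar (m i : ℕ) : Set (ℝ × ℝ) :=
  Set.Icc (((i : ℝ) - 1) * m) ((i : ℝ) * m) ×ˢ Set.Icc ((yCoord i : ℝ)) ((yCoord i : ℝ) + 1)

/-- The `i`-th connector of `D_n^m`: `[im - 1, im] × [y_i + 1, y_{i+1} + 1]`. -/
def connector (m i : ℕ) : Set (ℝ × ℝ) :=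
  Set.Icc ((i : ℝ) * m - 1) ((i : ℝ) * m) ×ˢ
    Set.Icc ((yCoord i : ℝ) + 1) ((yCoord (i + 1) : ℝ) + 1)

/-- The region `D_n^m`: union of `2^n` bars and `2^n - 1` connectors. -/
def Dregion (n m : ℕ) : Set (ℝ × ℝ) :=
  (⋃ i ∈ Finset.Icc 1 (2 ^ n), bar m i) ∪ ⋃ i ∈ Finset.Icc 1 (2 ^ n - 1), connector m i

open Nat in
private lemma sum_val (N : ℕ) : ∑ j ∈ Finset.Ico 1 (N+1), padicValNat 2 j = padicValNat 2 (N !) := by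
  induction N with
  | zero => simp
  | succ n ih =>
    rw [Finset.sum_Ico_succ_top (by omega), ih, Nat.factorial_succ,
        padicValNat.mul (Nat.succ_ne_zero n) (Nat.factorial_ne_zero n), Nat.add_comm]

open Nat in
private lemma yCoord_succ_eq (N : ℕ) : yCoord (N+1) = padicValNat 2 (N !) + N := by
  unfold yCoord rulerSeq
  rw [Finset.sum_add_distrib, sum_val]
  simp

open Nat in
private lemma val_fact_add (a b : ℕ) :
    padicValNat 2 (a !) + padicValNat 2 (b !) ≤ padicValNat 2 ((a+b)!) := by
  obtain ⟨c, hc⟩ := Nat.factorial_mul_factorial_dvd_factorial_add a b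
  have hc0 : c ≠ 0 := by
    intro h; rw [h, Nat.mul_zero] at hc; exact (Nat.factorial_ne_zero _) hc
  rw [hc, padicValNat.mul (Nat.mul_ne_zero (Nat.factorial_ne_zero a) (Nat.factorial_ne_zero b)) hc0,
      padicValNat.mul (Nat.factorial_ne_zero a) (Nat.factorial_ne_zero b)]
  omega

open Nat in
private lemma yCoord_window (a b : ℕ) :
    yCoord (a+1) + yCoord (b+1) ≤ yCoord (a+b+1) := by
  rw [yCoord_succ_eq, yCoord_succ_eq, yCoord_succ_eq]
  have := val_fact_add a b
  omega

open Nat in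
private lemma yCoord_mono : Monotone yCoord := fun a b h =>
  Finset.sum_le_sum_of_subset (Finset.Ico_subset_Ico le_rfl h)

private lemma sectD (m n : ℕ) (hm : 2 ≤ m) (X Y : ℝ)
    (hgen : ∀ i : ℕ, i ≤ 2^n → X ≠ (i:ℝ)*m)
    (hmem : (X,Y) ∈ Dregion n m) :
    ∃ k : ℕ, 1 ≤ k ∧ k ≤ 2^n ∧ ((k:ℝ)-1)*m < X ∧ X < (k:ℝ)*m ∧
      (yCoord k : ℝ) ≤ Y ∧
      (Y ≤ (yCoord k : ℝ) + 1 ∨ ((k:ℝ)*m - 1 ≤ X ∧ Y ≤ (yCoord (k+1) : ℝ) + 1)) := by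
  have hm' : (2:ℝ) ≤ (m:ℝ) := by exact_mod_cast hm
  rcases hmem with hbar | hcon
  · simp only [Set.mem_iUnion] at hbar
    obtain ⟨i, hi, hmem⟩ := hbar
    rw [Finset.mem_Icc] at hi
    simp only [bar, Set.mem_prod, Set.mem_Icc] at hmem
    obtain ⟨⟨hxa, hxb⟩, hya, hyb⟩ := hmem
    have hcast : ((i:ℝ) - 1) = ((i - 1 : ℕ) : ℝ) := by
      rw [Nat.cast_sub hi.1]; norm_num
    refine ⟨i, hi.1, hi.2, ?_, ?_, hya, Or.inl hyb⟩
    · exact lt_of_le_of_ne hxa (by rw [hcast]; exact (hgen (i-1) (by omega)).symm)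
    · exact lt_of_le_of_ne hxb (hgen i hi.2)
  · simp only [Set.mem_iUnion] at hcon
    obtain ⟨i, hi, hmem⟩ := hcon
    rw [Finset.mem_Icc] at hi
    simp only [connector, Set.mem_prod, Set.mem_Icc] at hmem
    obtain ⟨⟨hxa, hxb⟩, hya, hyb⟩ := hmem
    have h2n : 1 ≤ 2^n := Nat.one_le_two_pow
    refine ⟨i, hi.1, by omega, by nlinarith, lt_of_le_of_ne hxb (hgen i (by omega)),
      by linarith, Or.inr ⟨hxa, hyb⟩⟩

lemma index_unique (m k k' : ℕ) (hm : 2 ≤ m) (X : ℝ)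
    (h1 : ((k:ℝ)-1)*m < X) (h2 : X < (k:ℝ)*m)
    (h3 : ((k':ℝ)-1)*m < X) (h4 : X < (k':ℝ)*m) : k = k' := by
  have hm' : (2:ℝ) ≤ (m:ℝ) := by exact_mod_cast hm
  have e1 : (k:ℝ) < (k':ℝ) + 1 := by nlinarith
  have e2 : (k':ℝ) < (k:ℝ) + 1 := by nlinarith
  have e1' : k < k' + 1 := by exact_mod_cast e1
  have e2' : k' < k + 1 := by exact_mod_cast e2
  omega

lemma combine (m r k j : ℕ) (hm : 2 ≤ m) (hr1 : 1 ≤ r) (hj1 : 1 ≤ j)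
    (hwin : ∀ a b : ℕ, yCoord (a+1) + yCoord (b+1) ≤ yCoord (a+b+1))
    (xs ys X Y U : ℝ) (hx1 : 1 ≤ xs) (hx2 : xs ≤ (m:ℝ) - 1) (hy : 1 ≤ ys)
    (hU : U = X - (((r:ℝ)-1)*m + xs))
    (hXa : ((k:ℝ)-1)*m < X) (hXb : X < (k:ℝ)*m)
    (hUa : ((j:ℝ)-1)*m < U) (hUb : U < (j:ℝ)*m)
    (hYlo : (yCoord k : ℝ) ≤ Y)
    (hY' : Y - ((yCoord r:ℝ) - ys) ≤ (yCoord j:ℝ) + 1 ∨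
      ((j:ℝ)*m - 1 ≤ U ∧ Y - ((yCoord r:ℝ) - ys) ≤ (yCoord (j+1):ℝ) + 1)) :
    Y = (yCoord k : ℝ) := by
  have hm' : (2:ℝ) ≤ (m:ℝ) := by exact_mod_cast hm
  have h1 : (k:ℝ) < (j:ℝ) + (r:ℝ) + 1 := by nlinarith
  have h2 : (j:ℝ) + (r:ℝ) < (k:ℝ) + 2 := by nlinarith
  have h1' : k < j + r + 1 := by exact_mod_cast h1
  have h2' : j + r < k + 2 := by exact_mod_cast h2
  obtain ⟨jj, rfl⟩ : ∃ jj, j = jj + 1 := ⟨j - 1, by omega⟩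
  obtain ⟨rr, rfl⟩ : ∃ rr, r = rr + 1 := ⟨r - 1, by omega⟩
  rcases (by omega : jj + 1 + (rr + 1) = k ∨ jj + 1 + (rr + 1) = k + 1) with hc | hc
  · -- j + r = k : use window on (j, rr)
    have hw : (yCoord (jj+1+1) : ℝ) + (yCoord (rr+1) : ℝ) ≤ (yCoord k : ℝ) := by
      have := hwin (jj+1) rr
      rw [(by omega : jj + 1 + rr + 1 = k)] at this
      exact_mod_cast this
    have hmono : (yCoord (jj+1) : ℝ) ≤ (yCoord (jj+1+1) : ℝ) := by
      exact_mod_cast yCoord_mono (Nat.le_succ _)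
    rcases hY' with hb | ⟨_, hb⟩ <;> linarith
  · -- j + r = k + 1 : connector impossible, bar case
    have hkc : (k:ℝ) = (jj:ℝ) + 1 + (rr:ℝ) := by
      have : ((jj + 1 + (rr + 1) : ℕ) : ℝ) = ((k + 1 : ℕ) : ℝ) := by rw [hc]
      push_cast at this; linarith
    rcases hY' with hb | ⟨hcon, _⟩
    · have hw : (yCoord (jj+1) : ℝ) + (yCoord (rr+1) : ℝ) ≤ (yCoord k : ℝ) := by
        have := hwin jj rr
        rw [(by omega : jj + rr + 1 = k)] at this
        exact_mod_cast this
      linarith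
    · exfalso
      have hkm : (k:ℝ)*m = ((jj:ℝ)+1)*m + (rr:ℝ)*m := by rw [hkc]; ring
      push_cast at hcon hU
      linarith

theorem disjoint_steps (m n : ℕ) (hm : 2 ≤ m) (hn : 2 ≤ n)
    (r : ℕ) (hr1 : 1 ≤ r) (hr2 : r ≤ 2 ^ n)
    (xs ys : ℝ) (hx1 : 1 ≤ xs) (hx2 : xs ≤ (m : ℝ) - 1) (hy : 1 ≤ ys)
    (v : ℝ × ℝ) (A A' : Set (ℝ × ℝ))
    (hA : A = (· + v) '' Dregion n m)
    (hA' : A' = (· + (v + (((r : ℝ) - 1) * m + xs, (yCoord r : ℝ) - ys))) '' Dregion n m) :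
    Disjoint (interior A) (interior A') := by
  rw [Set.disjoint_left]
  intro p hp hp'
  obtain ⟨ε, hε, hball⟩ := Metric.isOpen_iff.mp (isOpen_interior.inter isOpen_interior) p ⟨hp, hp'⟩
  -- bad set of x-coordinates
  set B : Set ℝ := ((fun i : ℕ => (i:ℝ)*m + v.1) '' (Set.Iic (2^n))) ∪
      ((fun i : ℕ => (i:ℝ)*m + (((r:ℝ)-1)*m + xs) + v.1) '' (Set.Iic (2^n))) with hB
  have hBfin : B.Finite :=
    ((Set.finite_Iic _).image _).union ((Set.finite_Iic _).image _)
  have hIoo : (Set.Ioo (p.1 - ε/2) (p.1 + ε/2)).Infinite := Set.Ioo_infinite (by linarith)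
  obtain ⟨X, hXmem⟩ := (hIoo.diff hBfin).nonempty
  obtain ⟨⟨hXa, hXb⟩, hXB⟩ := hXmem
  -- the two test points
  have hq : ∀ Y : ℝ, |Y - p.2| < ε → ((X, Y) ∈ A ∧ (X, Y) ∈ A') := by
    intro Y hY
    have : (X, Y) ∈ Metric.ball p ε := by
      rw [Metric.mem_ball, Prod.dist_eq, Real.dist_eq, Real.dist_eq]
      simp only [max_lt_iff]
      constructor
      · rw [abs_sub_lt_iff]; constructor <;> linarith
      · exact hY
    obtain ⟨h1, h2⟩ := hball this
    exact ⟨interior_subset h1, interior_subset h2⟩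
  have hgen1 : ∀ i : ℕ, i ≤ 2^n → X - v.1 ≠ (i:ℝ)*m := by
    intro i hi hcontra
    exact hXB (Or.inl ⟨i, hi, show (i:ℝ)*m + v.1 = X by linarith⟩)
  have hgen2 : ∀ i : ℕ, i ≤ 2^n → (X - v.1) - (((r:ℝ)-1)*m + xs) ≠ (i:ℝ)*m := by
    intro i hi hcontra
    exact hXB (Or.inr ⟨i, hi, show (i:ℝ)*m + (((r:ℝ)-1)*m + xs) + v.1 = X by linarith⟩)
  -- membership transfer
  have hmemD : ∀ Y : ℝ, (X, Y) ∈ A → (X - v.1, Y - v.2) ∈ Dregion n m := by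
    intro Y hmem
    rw [hA] at hmem
    obtain ⟨z, hz, hzv⟩ := hmem
    obtain ⟨e1, e2⟩ := Prod.ext_iff.mp hzv
    simp only [Prod.fst_add, Prod.snd_add] at e1 e2
    have : z = (X - v.1, Y - v.2) := by
      apply Prod.ext <;> simp <;> linarith
    rwa [this] at hz
  have hmemD' : ∀ Y : ℝ, (X, Y) ∈ A' →
      (X - v.1 - (((r:ℝ)-1)*m + xs), Y - v.2 - ((yCoord r : ℝ) - ys)) ∈ Dregion n m := by
    intro Y hmem
    rw [hA'] at hmem
    obtain ⟨z, hz, hzv⟩ := hmem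
    obtain ⟨e1, e2⟩ := Prod.ext_iff.mp hzv
    simp only [Prod.fst_add, Prod.snd_add] at e1 e2
    have : z = (X - v.1 - (((r:ℝ)-1)*m + xs), Y - v.2 - ((yCoord r : ℝ) - ys)) := by
      apply Prod.ext <;> simp <;> linarith
    rwa [this] at hz
  -- the key claim : any point of both at x-coordinate X has a fixed y-value
  have hkey : ∀ Y : ℝ, |Y - p.2| < ε → ∃ k : ℕ,
      (((k:ℝ)-1)*m < X - v.1 ∧ X - v.1 < (k:ℝ)*m) ∧ Y - v.2 = (yCoord k : ℝ) := by
    intro Y hY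
    obtain ⟨hmA, hmA'⟩ := hq Y hY
    obtain ⟨k, hk1, hk2, hka, hkb, hklo, _⟩ := sectD m n hm _ _ hgen1 (hmemD Y hmA)
    obtain ⟨j, hj1, hj2, hja, hjb, hjlo, hjup⟩ := sectD m n hm _ _ hgen2 (hmemD' Y hmA')
    refine ⟨k, ⟨hka, hkb⟩, ?_⟩
    exact combine m r k j hm hr1 hj1 yCoord_window xs ys (X - v.1) (Y - v.2)
      (X - v.1 - (((r:ℝ)-1)*m + xs)) hx1 hx2 hy rfl hka hkb hja hjb hklo
      (hjup.imp (fun h => by linarith) (fun h => ⟨h.1, by linarith [h.2]⟩))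
  obtain ⟨k1, hk1s, hk1e⟩ := hkey (p.2 + ε/2) (by rw [abs_of_pos (by linarith)] <;> linarith)
  obtain ⟨k2, hk2s, hk2e⟩ := hkey (p.2 - ε/2) (by rw [abs_of_neg (by linarith)] <;> linarith)
  have : k1 = k2 := index_unique m k1 k2 hm (X - v.1) hk1s.1 hk1s.2 hk2s.1 hk2s.2
  rw [this] at hk1e
  have := hk1e.trans hk2e.symm
  linarith
end

section
/- For integers m ≥ 2 and n ≥ 2, the region D_n^m decomposes recursively as D_n^m = D_{n-1}^m ∪ (D_{n-1}^m + (2^{n-1}m, y_{2^{n-1}+1})) ∪ V_{2^{n-1}}; that is, the bars and connectors of D_n^m with indices above 2^{n-1} form a translate of D_{n-1}^m by the vector (2^{n-1}m, ∑_{j=1}^{2^{n-1}} s_j), joined to the first copy by the single connector V_{2^{n-1}}. -/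
lemma rulerSeq_pow_add (e j : ℕ) (hj : 1 ≤ j) (hje : j < 2 ^ e) :
    rulerSeq (2 ^ e + j) = rulerSeq j := by
  have : Fact (Nat.Prime 2) := ⟨Nat.prime_two⟩
  unfold rulerSeq
  congr 1
  have hj0 : j ≠ 0 := by omega
  set v := padicValNat 2 j with hv
  have hdvd : (2:ℕ) ^ v ∣ j := pow_padicValNat_dvd
  have hvlt : v < e := by
    have h2 : (2:ℕ) ^ v ≤ j := Nat.le_of_dvd (by omega) hdvd
    by_contra h
    have : (2:ℕ)^e ≤ 2^v := Nat.pow_le_pow_right (by norm_num) (by omega)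
    omega
  have hnd : ¬ (2:ℕ) ^ (v+1) ∣ j := pow_succ_padicValNat_not_dvd hj0
  have hsum0 : (2:ℕ)^e + j ≠ 0 := by omega
  apply le_antisymm
  · by_contra h
    push_neg at h
    have : (2:ℕ)^(v+1) ∣ 2^e + j := (padicValNat_dvd_iff_le hsum0).2 h
    have hpe : (2:ℕ)^(v+1) ∣ 2^e := pow_dvd_pow 2 (by omega)
    exact hnd ((Nat.dvd_add_right hpe).1 this)
  · exact (padicValNat_dvd_iff_le hsum0).1
      (Dvd.dvd.add (pow_dvd_pow 2 (by omega)) hdvd)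

lemma yCoord_pow_add (e i : ℕ) (hi : 1 ≤ i) (hie : i ≤ 2 ^ e) :
    yCoord (2 ^ e + i) = yCoord (2 ^ e + 1) + yCoord i := by
  unfold yCoord
  rw [← Finset.sum_Ico_consecutive _ (by omega : 1 ≤ 2^e+1) (by omega : 2^e+1 ≤ 2^e+i)]
  congr 1
  rw [Finset.sum_Ico_eq_sum_range, Finset.sum_Ico_eq_sum_range]
  have : 2^e + i - (2^e+1) = i - 1 := by omega
  rw [this]
  apply Finset.sum_congr rfl
  intro j hj
  simp only [Finset.mem_range] at hj
  have : 2^e + 1 + j = 2^e + (1+j) := by ring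
  rw [this, rulerSeq_pow_add e (1+j) (by omega) (by omega)]

lemma image_prod_Icc (a b c d t s : ℝ) :
    ((· + (t, s)) '' (Set.Icc a b ×ˢ Set.Icc c d)) =
      Set.Icc (a + t) (b + t) ×ˢ Set.Icc (c + s) (d + s) := by
  ext ⟨x, y⟩
  simp only [Set.mem_image, Set.mem_prod, Set.mem_Icc, Prod.exists, Prod.mk_add_mk,
    Prod.mk.injEq]
  constructor
  · rintro ⟨p, q, ⟨⟨h1, h2⟩, h3, h4⟩, h5, h6⟩
    subst h5; subst h6
    exact ⟨⟨by linarith, by linarith⟩, by linarith, by linarith⟩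
  · rintro ⟨⟨h1, h2⟩, h3, h4⟩
    exact ⟨x - t, y - s, ⟨⟨by linarith, by linarith⟩, by linarith, by linarith⟩,
      by ring, by ring⟩

lemma image_bar (e m i : ℕ) (h1 : 1 ≤ i) (h2 : i ≤ 2 ^ e) :
    (· + (((2 ^ e * m : ℕ) : ℝ), (yCoord (2 ^ e + 1) : ℝ))) '' bar m i = bar m (2 ^ e + i) := by
  have hy : (yCoord (2 ^ e + i) : ℝ) = (yCoord i : ℝ) + (yCoord (2 ^ e + 1) : ℝ) := by
    rw [yCoord_pow_add e i h1 h2]; push_cast; ring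
  unfold bar
  rw [image_prod_Icc, hy]
  congr 1 <;> congr 1 <;> push_cast <;> ring

lemma image_connector (e m i : ℕ) (h1 : 1 ≤ i) (h2 : i + 1 ≤ 2 ^ e) :
    (· + (((2 ^ e * m : ℕ) : ℝ), (yCoord (2 ^ e + 1) : ℝ))) '' connector m i =
      connector m (2 ^ e + i) := by
  have hy : (yCoord (2 ^ e + i) : ℝ) = (yCoord i : ℝ) + (yCoord (2 ^ e + 1) : ℝ) := by
    rw [yCoord_pow_add e i h1 (by omega)]; push_cast; ring
  have hy' : (yCoord (2 ^ e + i + 1) : ℝ) = (yCoord (i + 1) : ℝ) + (yCoord (2 ^ e + 1) : ℝ) := by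
    have : 2 ^ e + i + 1 = 2 ^ e + (i + 1) := by ring
    rw [this, yCoord_pow_add e (i + 1) (by omega) h2]; push_cast; ring
  unfold connector
  rw [image_prod_Icc, hy, hy']
  congr 1 <;> congr 1 <;> push_cast <;> ring

lemma biUnion_Icc_split (f : ℕ → Set (ℝ × ℝ)) (a b c : ℕ) (hab : a ≤ b + 1) (hbc : b ≤ c) :
    ⋃ i ∈ Finset.Icc a c, f i =
      (⋃ i ∈ Finset.Icc a b, f i) ∪ ⋃ i ∈ Finset.Icc (b + 1) c, f i := by
  ext x
  simp only [Set.mem_iUnion, Set.mem_union, Finset.mem_Icc, exists_prop]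
  constructor
  · rintro ⟨i, hi, hx⟩
    rcases le_or_gt i b with h | h
    · exact Or.inl ⟨i, ⟨hi.1, h⟩, hx⟩
    · exact Or.inr ⟨i, ⟨h, hi.2⟩, hx⟩
  · rintro (⟨i, hi, hx⟩ | ⟨i, hi, hx⟩) <;> exact ⟨i, by omega, hx⟩

lemma biUnion_Icc_shift (f : ℕ → Set (ℝ × ℝ)) (k c : ℕ) :
    ⋃ i ∈ Finset.Icc (k + 1) (k + c), f i = ⋃ i ∈ Finset.Icc 1 c, f (k + i) := by
  ext x
  simp only [Set.mem_iUnion, Finset.mem_Icc, exists_prop]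
  constructor
  · rintro ⟨i, hi, hx⟩
    refine ⟨i - k, by omega, ?_⟩
    have : k + (i - k) = i := by omega
    rwa [this]
  · rintro ⟨i, hi, hx⟩
    exact ⟨k + i, by omega, hx⟩

theorem Dregion_recursive_decomposition (n m : ℕ) (hn : 2 ≤ n) (hm : 2 ≤ m) :
    Dregion n m =
      Dregion (n - 1) m ∪
        ((· + (((2 ^ (n - 1) * m : ℕ) : ℝ), (yCoord (2 ^ (n - 1) + 1) : ℝ))) ''
          Dregion (n - 1) m) ∪
        connector m (2 ^ (n - 1)) := by
  set e := n - 1 with he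
  set k := 2 ^ e with hk
  have hk2 : 2 ≤ k := by
    have : 1 ≤ e := by omega
    calc 2 = 2 ^ 1 := rfl
    _ ≤ 2 ^ e := Nat.pow_le_pow_right (by norm_num) this
  have h2n : 2 ^ n = 2 * k := by
    rw [hk, he, ← pow_succ']
    congr 1
    omega
  -- image of D_{n-1}
  have himg : (· + (((k * m : ℕ) : ℝ), (yCoord (k + 1) : ℝ))) '' Dregion e m =
      (⋃ i ∈ Finset.Icc (k + 1) (2 * k), bar m i) ∪
        ⋃ i ∈ Finset.Icc (k + 1) (2 * k - 1), connector m i := by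
    unfold Dregion
    rw [Set.image_union]
    congr 1
    · rw [Set.image_iUnion₂]
      rw [show 2 * k = k + k by ring, biUnion_Icc_shift]
      apply Set.iUnion₂_congr
      intro i hi
      simp only [Finset.mem_Icc] at hi
      exact image_bar e m i hi.1 hi.2
    · rw [Set.image_iUnion₂]
      rw [show 2 * k - 1 = k + (k - 1) by omega, biUnion_Icc_shift]
      apply Set.iUnion₂_congr
      intro i hi
      simp only [Finset.mem_Icc] at hi
      have := image_connector e m i hi.1 (by omega)
      rw [← hk] at this
      convert this using 2
  rw [himg]
  unfold Dregion
  rw [h2n]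
  rw [biUnion_Icc_split (bar m) 1 k (2 * k) (by omega) (by omega)]
  rw [biUnion_Icc_split (connector m) 1 k (2 * k - 1) (by omega) (by omega)]
  rw [biUnion_Icc_split (connector m) 1 (k - 1) k (by omega) (by omega)]
  have hkk : k - 1 + 1 = k := by omega
  rw [hkk]
  have hsingle : ⋃ i ∈ Finset.Icc k k, connector m i = connector m k := by
    simp
  rw [hsingle, ← hk]
  ext x
  simp only [Set.mem_union]
  tauto
end
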